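/- Let ε > 0 and let E ⊆ ℝ^d be a Borel set with the property that there exists r > 0 such that for every x ∈ E there is an open ball of radius r contained in E whose closure contains x. Then the number of points of the lattice εℤ^d contained in E is at most C·|E|/(min(ε,r))^d, where |E| denotes the Lebesgue measure of E and C is a constant depending only on d. -/

import Mathlib

/-!
Each lattice point `x ∈ E` lies in the closure of a ball of radius `r` inside `E`; sliding
towards its centre gives a ball of radius `ρ / 4` (`ρ = min ε r`) inside `E` whose centre is
within `ρ / 4` of `x`. Distinct points of `εℤ^d` are at distance at least `ε ≥ ρ`, so these
small balls are pairwise disjoint, and comparing volumes gives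
`#(E ∩ εℤ^d) · (ρ / 4)^d |B₁| ≤ |E|`, i.e. the claim with `C = 4^d / |B₁|`.
-/

open MeasureTheory Set ENNReal Metric

lemma exists_ball_subset_ball_dist_le_of_mem_closedBall {V : Type*} [NormedAddCommGroup V]
    [NormedSpace ℝ V] {c x : V} {r s : ℝ} (hr : 0 < r) (hs : 0 ≤ s) (hsr : s ≤ r)
    (hx : x ∈ closedBall c r) :
    ∃ y, ball y s ⊆ ball c r ∧ dist y x ≤ s := by
  set t := s / r
  have ht0 : 0 ≤ t := by positivity
  have ht1 : t ≤ 1 := div_le_one_of_le₀ hsr hr.le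
  have htr : t * r = s := div_mul_cancel₀ s hr.ne'
  have hxc : ‖x - c‖ ≤ r := by rwa [← dist_eq_norm]
  refine ⟨x + t • (c - x), ball_subset_ball' ?_, ?_⟩
  · have hyc : x + t • (c - x) - c = (1 - t) • (x - c) := by module
    rw [dist_eq_norm, hyc, norm_smul, Real.norm_of_nonneg (by linarith)]
    nlinarith [norm_nonneg (x - c)]
  · rw [dist_eq_norm, add_sub_cancel_left, norm_smul, Real.norm_of_nonneg ht0, norm_sub_rev]
    nlinarith

lemma pairwiseDisjoint_ball_of_le_dist {α : Type*} [PseudoMetricSpace α] {S : Set α}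
    {y : α → α} {s : ℝ} (hsep : ∀ a ∈ S, ∀ b ∈ S, a ≠ b → 4 * s ≤ dist a b)
    (hy : ∀ x ∈ S, dist (y x) x ≤ s) :
    S.PairwiseDisjoint fun x => ball (y x) s := by
  intro a ha b hb hab
  refine ball_disjoint_ball ?_
  have := dist_triangle4 a (y a) (y b) b
  linarith [hsep a ha b hb hab, hy a ha, hy b hb, dist_comm a (y a)]

lemma encard_mul_le_measure {α β : Type*} [MeasurableSpace α] (μ : Measure α) {S : Set β}
    {A : β → Set α} {E : Set α} {v : ℝ≥0∞} (hA : ∀ x, MeasurableSet (A x))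
    (hdisj : S.PairwiseDisjoint A) (hAE : ∀ x ∈ S, A x ⊆ E)
    (hv : ∀ x ∈ S, v ≤ μ (A x)) :
    S.encard * v ≤ μ E :=
  calc S.encard * v = ∑' _ : S, v := (ENNReal.tsum_set_const S v).symm
    _ ≤ ∑' x : S, μ (A x) := ENNReal.tsum_le_tsum fun x => hv x x.2
    _ ≤ μ (⋃ x : S, A x) := tsum_meas_le_meas_iUnion_of_disjoint μ (fun x => hA x)
        fun a b hab => hdisj a.2 b.2 (Subtype.coe_injective.ne hab)
    _ ≤ μ E := measure_mono (iUnion_subset fun x => hAE x x.2)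

def scaledLattice (ι : Type*) (ε : ℝ) : Set (EuclideanSpace ℝ ι) :=
  {x | ∀ k, ∃ z : ℤ, x k = ε * z}

lemma abs_le_dist_of_mem_scaledLattice {ι : Type*} [Fintype ι] {ε : ℝ}
    {a b : EuclideanSpace ℝ ι} (ha : a ∈ scaledLattice ι ε) (hb : b ∈ scaledLattice ι ε)
    (hab : a ≠ b) : |ε| ≤ dist a b := by
  obtain ⟨k, hk⟩ : ∃ k, a k ≠ b k := by
    by_contra! h
    exact hab (PiLp.ext h)
  obtain ⟨z, hz⟩ := ha k
  obtain ⟨w, hw⟩ := hb k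
  have hzw : (1 : ℝ) ≤ |(z : ℝ) - w| := by
    have : z ≠ w := by rintro rfl; exact hk (hz.trans hw.symm)
    exact_mod_cast Int.one_le_abs (sub_ne_zero.mpr this)
  calc |ε| ≤ |ε| * |(z : ℝ) - w| := le_mul_of_one_le_right (abs_nonneg ε) hzw
    _ = dist (a k) (b k) := by rw [Real.dist_eq, hz, hw, ← mul_sub, abs_mul]
    _ ≤ dist a b := PiLp.dist_apply_le a b k

/-- Counting lattice points in a set that is a union of balls of radius `r`:
`#(E ∩ εℤ^d) ≤ C |E| / (ε ∧ r)^d` with `C = C(d)`. -/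
theorem card_lattice_points_le (d : ℕ) :
    ∃ C : ℝ, 0 < C ∧
      ∀ (ε r : ℝ), 0 < ε → 0 < r →
        ∀ E : Set (EuclideanSpace ℝ (Fin d)), MeasurableSet E →
          (∀ x ∈ E, ∃ c : EuclideanSpace ℝ (Fin d),
            Metric.ball c r ⊆ E ∧ x ∈ closure (Metric.ball c r)) →
          ((E ∩ {x : EuclideanSpace ℝ (Fin d) | ∀ k, ∃ z : ℤ, x k = ε * z}).encard
              : ℝ≥0∞)
            ≤ ENNReal.ofReal C * volume E / ENNReal.ofReal ((min ε r)^d) := by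
  set U := volume (ball (0 : EuclideanSpace ℝ (Fin d)) 1)
  have hU_top : U ≠ ⊤ := measure_ball_lt_top.ne
  have hU : 0 < U.toReal := ENNReal.toReal_pos (measure_ball_pos _ _ one_pos).ne' hU_top
  refine ⟨4 ^ d / U.toReal, by positivity, fun ε r hε hr E _ hball => ?_⟩
  set S := E ∩ scaledLattice (Fin d) ε
  set ρ := min ε r
  have hρ : 0 < ρ := lt_min hε hr
  have hsmall : ∀ x ∈ S, ∃ y, ball y (ρ / 4) ⊆ E ∧ dist y x ≤ ρ / 4 := fun x hx => by
    obtain ⟨c, hcE, hxc⟩ := hball x hx.1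
    rw [closure_ball c hr.ne'] at hxc
    obtain ⟨y, hyc, hyx⟩ := exists_ball_subset_ball_dist_le_of_mem_closedBall (s := ρ / 4) hr
      (by positivity) (by linarith [min_le_right ε r]) hxc
    exact ⟨y, hyc.trans hcE, hyx⟩
  choose! y hyE hyx using hsmall
  have hdisj : S.PairwiseDisjoint fun x => ball (y x) (ρ / 4) :=
    pairwiseDisjoint_ball_of_le_dist (fun a ha b hb hab => by
      linarith [abs_le_dist_of_mem_scaledLattice ha.2 hb.2 hab, min_le_left ε r, le_abs_self ε])
      hyx
  have hvol : ∀ x : EuclideanSpace ℝ (Fin d),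
      volume (ball x (ρ / 4)) = ENNReal.ofReal ((ρ / 4) ^ d) * U := fun x => by
    rw [Measure.addHaar_ball_of_pos _ _ (by positivity), finrank_euclideanSpace_fin]
  have hpack := encard_mul_le_measure volume (fun _ => measurableSet_ball) hdisj hyE
    fun x _ => (hvol (y x)).ge
  have hρd : ENNReal.ofReal (ρ ^ d) =
      ENNReal.ofReal (4 ^ d / U.toReal) * (ENNReal.ofReal ((ρ / 4) ^ d) * U) := by
    rw [← ENNReal.ofReal_toReal hU_top,
      ← ENNReal.ofReal_mul (by positivity), ← ENNReal.ofReal_mul (by positivity), div_pow]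
    field_simp
    rw [ENNReal.toReal_ofReal hU.le, mul_div_cancel_right₀ _ hU.ne']
  rw [ENNReal.le_div_iff_mul_le (Or.inl (by positivity)) (Or.inl ofReal_ne_top), hρd,
    mul_left_comm]
  exact mul_le_mul_right hpack _
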